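/- For every k ≥ 1, the edge set of the hypercube Q_{2k} can be partitioned into k pairwise edge-disjoint spanning trees together with a matching of size k (k pairwise non-adjacent edges). -/

import Mathlib

/-!
Gray-coding each pair of coordinates identifies `Q_{2k}` with the torus `C₄ᵏ` on
`ZMod k → ZMod 4`, whose edges are `{a, a + e_d}`.

Fix a direction `j`. Varying coordinate `j` of a vertex `v` runs through a 4-cycle, the `j`-line
of `v`. If `v` vanishes off `j`, cut this line at the edge `{1, 2}` and root it at `0`. Otherwise
let `J` and `D` be the nonzero coordinates of `v` next after and last before `j`, cyclically in
`ZMod k`; cut the line at `{v J - 1, v J}` and root it at `v D`. The parent of `v` in tree `j` is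
its neighbour towards the root on the cut line, or `v - e_D` if `v j = v D` already. The edge
`{v - e_D, v}` is exactly the cut edge of the `D`-line of `v - e_D`, because `j` is the next nonzero
coordinate after `D` there. So every torus edge is an uncut edge of a `d`-line, lying in tree `d`
only, or a cut edge, lying in tree `J` only, or one of the cut edges `{e_d, 2 e_d}`, which form
the matching. Four times the sum of the coordinates other than `j` plus the distance to the root
decreases along parents, so the parent graphs are trees.
-/

open SimpleGraph

/-- The `n`-dimensional hypercube graph `Q_n`: vertices are binary vectors of length `n`,
two vertices adjacent iff they differ in exactly one coordinate. -/
def hypercube (n : ℕ) : SimpleGraph (Fin n → Bool) where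
  Adj x y := ∃! i, x i ≠ y i
  symm := by
    refine ⟨?_⟩
    rintro x y ⟨i, hi, hu⟩
    exact ⟨i, hi.symm, fun j hj => hu j hj.symm⟩
  loopless := by
    refine ⟨?_⟩
    rintro x ⟨i, hi, -⟩
    exact hi rfl

namespace SimpleGraph

variable {V W : Type*}

def parentGraph (p : V → V) : SimpleGraph V := fromRel fun v w => p v = w

lemma mem_edgeSet_parentGraph {p : V → V} {e : Sym2 V} :
    e ∈ (parentGraph p).edgeSet ↔ ∃ v, p v ≠ v ∧ s(v, p v) = e := by
  induction e with
  | _ x y =>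
    simp only [mem_edgeSet, parentGraph, fromRel_adj]
    constructor
    · rintro ⟨hxy, rfl | rfl⟩
      · exact ⟨x, Ne.symm hxy, rfl⟩
      · exact ⟨y, hxy, Sym2.eq_swap⟩
    · rintro ⟨v, hv, he⟩
      rcases Sym2.eq_iff.mp he with ⟨rfl, rfl⟩ | ⟨rfl, rfl⟩
      · exact ⟨Ne.symm hv, Or.inl rfl⟩
      · exact ⟨hv, Or.inr rfl⟩

section ParentGraph

variable {p : V → V} {μ : V → ℕ} {r : V}

lemma parentGraph_reachable (hμ : ∀ v ≠ r, μ (p v) < μ v) (v : V) :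
    (parentGraph p).Reachable v r := by
  induction h : μ v using Nat.strong_induction_on generalizing v with
  | _ n ih =>
    rcases eq_or_ne v r with rfl | hv
    · rfl
    · have hlt := hμ v hv
      have hadj : (parentGraph p).Adj v (p v) :=
        (fromRel_adj _ _ _).mpr ⟨fun e => by rw [← e] at hlt; omega, Or.inl rfl⟩
      exact hadj.reachable.trans (ih _ (h ▸ hlt) _ rfl)

/-- Every vertex reaches `r`, and the edges `{v, p v}`, `v ≠ r`, are pairwise distinct, so
there are `|V| - 1` of them. -/
theorem isTree_parentGraph [Finite V] (hr : p r = r) (hμ : ∀ v ≠ r, μ (p v) < μ v) :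
    (parentGraph p).IsTree := by
  have hfix : ∀ v, p v = v ↔ v = r := fun v =>
    ⟨fun h => by_contra fun hv => (hμ v hv).ne (by rw [h]), fun h => h ▸ hr⟩
  let f : {v // v ≠ r} → (parentGraph p).edgeSet := fun v =>
    ⟨s(v, p v), mem_edgeSet_parentGraph.mpr ⟨v, mt (hfix v).mp v.2, rfl⟩⟩
  have hf : Function.Bijective f := by
    refine ⟨fun v w hvw => ?_, fun ⟨e, he⟩ => ?_⟩
    · rcases Sym2.eq_iff.mp (congrArg Subtype.val hvw) with ⟨h, -⟩ | ⟨h₁, h₂⟩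
      · exact Subtype.ext h
      · have hv := hμ v v.2
        have hw := hμ w w.2
        rw [h₂] at hv
        rw [← h₁] at hw
        omega
    · obtain ⟨v, hv, rfl⟩ := mem_edgeSet_parentGraph.mp he
      exact ⟨⟨v, mt (hfix v).mpr hv⟩, rfl⟩
  rw [isTree_iff_connected_and_card]
  refine ⟨(connected_iff_exists_forall_reachable _).mpr
    ⟨r, fun v => (parentGraph_reachable hμ v).symm⟩, ?_⟩
  rw [← Nat.card_congr (Equiv.ofBijective f hf)]
  have := Fintype.ofFinite V
  classical
  simp only [ne_eq, Nat.card_eq_fintype_card, Fintype.card_subtype_compl, Fintype.card_unique]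
  exact Nat.sub_add_cancel (Fintype.card_pos_iff.mpr ⟨r⟩)

end ParentGraph

lemma edgeSet_comap (f : V → W) (G : SimpleGraph W) :
    (G.comap f).edgeSet = Sym2.map f ⁻¹' G.edgeSet := by
  ext e
  induction e with
  | _ x y => rfl

lemma ncard_preimage_sym2Map (φ : V ≃ W) (R : Set (Sym2 W)) :
    (Sym2.map φ ⁻¹' R).ncard = R.ncard :=
  Set.ncard_preimage_of_injective_subset_range (Sym2.map.injective φ.injective)
    fun e _ => ⟨Sym2.map φ.symm e, by simp [Sym2.map_map]⟩

structure IsTreeMatchingDecomposition {ι : Type*} (G : SimpleGraph V) (T : ι → SimpleGraph V)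
    (R : Set (Sym2 V)) : Prop where
  le : ∀ i, T i ≤ G
  isTree : ∀ i, (T i).IsTree
  pairwise_disjoint : Pairwise fun i j => Disjoint (T i).edgeSet (T j).edgeSet
  disjoint_matching : ∀ i, Disjoint (T i).edgeSet R
  iUnion_union_eq : (⋃ i, (T i).edgeSet) ∪ R = G.edgeSet
  matching : R.Pairwise fun e f => ∀ v, v ∈ e → v ∉ f

namespace IsTreeMatchingDecomposition

variable {ι κ : Type*} {G : SimpleGraph V} {H : SimpleGraph W} {T : ι → SimpleGraph W}
  {R : Set (Sym2 W)}

lemma comap (φ : G ≃g H) (h : H.IsTreeMatchingDecomposition T R) :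
    G.IsTreeMatchingDecomposition (fun i => (T i).comap φ) (Sym2.map φ ⁻¹' R) where
  le i _ _ hxy := φ.map_adj_iff.mp (h.le i hxy)
  isTree i := (Iso.comap φ.toEquiv (T i)).isTree_iff.mpr (h.isTree i)
  pairwise_disjoint i j hij := by
    simpa only [edgeSet_comap] using (h.pairwise_disjoint hij).preimage _
  disjoint_matching i := by
    simpa only [edgeSet_comap] using (h.disjoint_matching i).preimage _
  iUnion_union_eq := by
    simp only [edgeSet_comap, ← Set.preimage_iUnion, ← Set.preimage_union, h.iUnion_union_eq]
    exact φ.toEmbedding.preimage_edgeSet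
  matching e he f hf hef v hv hv' :=
    h.matching he hf ((Sym2.map.injective φ.injective).ne hef) (φ v)
      (Sym2.mem_map.mpr ⟨v, hv, rfl⟩) (Sym2.mem_map.mpr ⟨v, hv', rfl⟩)

lemma reindex (h : H.IsTreeMatchingDecomposition T R) (e : κ ≃ ι) :
    H.IsTreeMatchingDecomposition (T ∘ e) R where
  le i := h.le (e i)
  isTree i := h.isTree (e i)
  pairwise_disjoint _ _ hij := h.pairwise_disjoint (e.injective.ne hij)
  disjoint_matching i := h.disjoint_matching (e i)
  iUnion_union_eq := by rw [← h.iUnion_union_eq, ← e.surjective.iUnion_comp]; rfl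
  matching := h.matching

end IsTreeMatchingDecomposition

end SimpleGraph

namespace ZMod

variable {k : ℕ}

/-- `l` lies strictly inside the cyclic interval that runs upwards from `a` to `b`. -/
def StrictlyBetween (a b l : ZMod k) : Prop := 0 < (l - a).val ∧ (l - a).val < (b - a).val

lemma StrictlyBetween.ne_left {a b l : ZMod k} (h : StrictlyBetween a b l) : l ≠ a := by
  rintro rfl
  simp [StrictlyBetween] at h

lemma StrictlyBetween.ne_right {a b l : ZMod k} (h : StrictlyBetween a b l) : l ≠ b := by
  rintro rfl
  exact h.2.false

variable {M : Type*} [Zero M]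

def VanishesBetween (w : ZMod k → M) (a b : ZMod k) : Prop :=
  a ≠ b ∧ ∀ l, StrictlyBetween a b l → w l = 0

-- Both are junk values when `w` vanishes away from the base point.
noncomputable def nextSupport (w : ZMod k → M) (a : ZMod k) : ZMod k :=
  Classical.epsilon fun b => VanishesBetween w a b ∧ w b ≠ 0

noncomputable def prevSupport (w : ZMod k → M) (b : ZMod k) : ZMod k :=
  Classical.epsilon fun a => VanishesBetween w a b ∧ w a ≠ 0

variable {w v : ZMod k → M} {a b : ZMod k}

lemma nextSupport_congr (h : ∀ l ≠ a, v l = w l) : nextSupport v a = nextSupport w a := by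
  unfold nextSupport VanishesBetween
  congr 1
  ext b
  constructor <;> rintro ⟨⟨hab, hz⟩, hb⟩
  · exact ⟨⟨hab, fun l hl => h l hl.ne_left ▸ hz l hl⟩, h b hab.symm ▸ hb⟩
  · exact ⟨⟨hab, fun l hl => (h l hl.ne_left).symm ▸ hz l hl⟩, (h b hab.symm).symm ▸ hb⟩

lemma prevSupport_congr (h : ∀ l ≠ b, v l = w l) : prevSupport v b = prevSupport w b := by
  unfold prevSupport VanishesBetween
  congr 1
  ext a
  constructor <;> rintro ⟨⟨hab, hz⟩, ha⟩
  · exact ⟨⟨hab, fun l hl => h l hl.ne_right ▸ hz l hl⟩, h a hab ▸ ha⟩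
  · exact ⟨⟨hab, fun l hl => (h l hl.ne_right).symm ▸ hz l hl⟩, (h a hab).symm ▸ ha⟩

variable [NeZero k]

lemma val_add_eq_or (x y : ZMod k) :
    (x + y).val = x.val + y.val ∨ (x + y).val + k = x.val + y.val := by
  rcases lt_or_ge (x.val + y.val) k with h | h
  · exact .inl (val_add_of_lt h)
  · exact .inr (val_add_val_of_le h).symm

lemma strictlyBetween_iff_val_lt {a b l : ZMod k} (hab : a ≠ b) :
    StrictlyBetween a b l ↔ (a - b).val < (l - b).val := by
  have hy : (b - a).val ≠ 0 := by rwa [Ne, val_eq_zero, sub_eq_zero, eq_comm]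
  have hneg := val_add_eq_or (a - b) (b - a)
  have hsplit := val_add_eq_or (l - a) (a - b)
  rw [sub_add_sub_cancel, sub_self, val_zero] at hneg
  rw [sub_add_sub_cancel] at hsplit
  have := val_lt (l - b)
  have := val_lt (l - a)
  unfold StrictlyBetween
  omega

lemma val_sub_injective (a : ZMod k) : Function.Injective fun l : ZMod k => (l - a).val :=
  fun _ _ h => sub_left_injective (val_injective k h)

lemma nextSupport_spec (h : ∃ l ≠ a, w l ≠ 0) :
    VanishesBetween w a (nextSupport w a) ∧ w (nextSupport w a) ≠ 0 := by
  classical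
  refine Classical.epsilon_spec (p := fun b => VanishesBetween w a b ∧ w b ≠ 0) ?_
  obtain ⟨b, hb, hmin⟩ := Finset.exists_min_image (Finset.univ.filter fun l => l ≠ a ∧ w l ≠ 0)
    (fun l => (l - a).val) (by simpa [Finset.Nonempty] using h)
  simp only [Finset.mem_filter, Finset.mem_univ, true_and] at hb hmin
  refine ⟨b, ⟨hb.1.symm, fun l hl => by_contra fun hwl => ?_⟩, hb.2⟩
  exact (hmin l ⟨hl.ne_left, hwl⟩).not_gt hl.2

lemma prevSupport_spec (h : ∃ l ≠ b, w l ≠ 0) :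
    VanishesBetween w (prevSupport w b) b ∧ w (prevSupport w b) ≠ 0 := by
  classical
  refine Classical.epsilon_spec (p := fun a => VanishesBetween w a b ∧ w a ≠ 0) ?_
  obtain ⟨a, ha, hmax⟩ := Finset.exists_max_image (Finset.univ.filter fun l => l ≠ b ∧ w l ≠ 0)
    (fun l => (l - b).val) (by simpa [Finset.Nonempty] using h)
  simp only [Finset.mem_filter, Finset.mem_univ, true_and] at ha hmax
  refine ⟨a, ⟨ha.1, fun l hl => by_contra fun hwl => ?_⟩, ha.2⟩
  exact (hmax l ⟨hl.ne_right, hwl⟩).not_gt ((strictlyBetween_iff_val_lt ha.1).mp hl)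

lemma nextSupport_eq (h : VanishesBetween w a b) (hb : w b ≠ 0) : nextSupport w a = b := by
  obtain ⟨⟨hab', hz'⟩, hb'⟩ := nextSupport_spec ⟨b, h.1.symm, hb⟩
  by_contra hne
  have hpos : ∀ c, a ≠ c → 0 < (c - a).val := fun c hc => by
    rwa [Nat.pos_iff_ne_zero, Ne, val_eq_zero, sub_eq_zero, eq_comm]
  rcases lt_or_gt_of_ne ((val_sub_injective a).ne hne) with hlt | hlt
  · exact hb' (h.2 _ ⟨hpos _ hab', hlt⟩)
  · exact hb (hz' _ ⟨hpos _ h.1, hlt⟩)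

lemma prevSupport_eq (h : VanishesBetween w a b) (ha : w a ≠ 0) : prevSupport w b = a := by
  obtain ⟨⟨hab', hz'⟩, ha'⟩ := prevSupport_spec ⟨a, h.1, ha⟩
  by_contra hne
  rcases lt_or_gt_of_ne ((val_sub_injective b).ne hne) with hlt | hlt
  · exact ha (hz' _ ((strictlyBetween_iff_val_lt hab').mpr hlt))
  · exact ha' (h.2 _ ((strictlyBetween_iff_val_lt h.1).mpr hlt))

end ZMod

section PiSingle

variable {ι M : Type*} [DecidableEq ι]

lemma add_single_apply_of_ne [AddZeroClass M] (v : ι → M) {d l : ι} (x : M) (h : l ≠ d) :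
    (v + Pi.single d x : ι → M) l = v l := by
  simp [Pi.single_eq_of_ne h]

lemma add_single_neg_add_single [AddGroup M] (v : ι → M) (d : ι) (x : M) :
    v + Pi.single d (-x) + Pi.single d x = v := by
  rw [add_assoc, ← Pi.single_add, neg_add_cancel, Pi.single_zero, add_zero]

lemma add_single_add_single_neg [AddGroup M] (v : ι → M) (d : ι) (x : M) :
    v + Pi.single d x + Pi.single d (-x) = v := by
  simpa using add_single_neg_add_single v d (-x)

lemma eq_of_single_eq [Zero M] {d d' : ι} {x y : M} (hx : x ≠ 0)
    (h : (Pi.single d x : ι → M) = Pi.single d' y) : d = d' := by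
  by_contra hdd
  have h := congrFun h d
  rw [Pi.single_eq_same, Pi.single_eq_of_ne hdd] at h
  exact hx h

end PiSingle

namespace HypercubeDecomposition

open ZMod

/-- Removing the edge `{s, s + 1}` from the 4-cycle `ZMod 4` leaves the path
`s + 1, s + 2, s + 3, s`; `lineRank s p` is the position of `p` on it. -/
def lineRank (s p : ZMod 4) : ℕ := (p - s - 1).val

def lineStep (s h p : ZMod 4) : ZMod 4 :=
  if p = h then 0 else if lineRank s p < lineRank s h then 1 else -1

def lineDist (s h p : ZMod 4) : ℕ :=
  max (lineRank s p) (lineRank s h) - min (lineRank s p) (lineRank s h)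

lemma lineDist_le (s h p : ZMod 4) : lineDist s h p ≤ 3 := by
  revert s h p; decide

lemma lineDist_add_lineStep_lt (s h p : ZMod 4) (hp : p ≠ h) :
    lineDist s h (p + lineStep s h p) < lineDist s h p := by
  revert s h p; decide

lemma lineStep_cases (s h p : ZMod 4) :
    lineStep s h p = 0 ∨ (lineStep s h p = 1 ∧ p ≠ s) ∨ (lineStep s h p = -1 ∧ p - 1 ≠ s) := by
  revert s h p; decide

lemma lineStep_cover (s h p : ZMod 4) (hp : p ≠ s) :
    (p ≠ h ∧ lineStep s h p = 1) ∨ (p + 1 ≠ h ∧ lineStep s h (p + 1) = -1) := by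
  revert s h p; decide

lemma val_sub_one_add_one {x : ZMod 4} (hx : x ≠ 0) : (x - 1).val + 1 = x.val := by
  revert x; decide

lemma sum_val_sub_single_add_one {ι : Type*} [DecidableEq ι] {v : ι → ZMod 4} {s : Finset ι}
    {d : ι} (hd : d ∈ s) (hv : v d ≠ 0) :
    ∑ l ∈ s, ((v - Pi.single d 1 : ι → ZMod 4) l).val + 1 = ∑ l ∈ s, (v l).val := by
  rw [← Finset.add_sum_erase s _ hd, ← Finset.add_sum_erase s _ hd, add_right_comm]
  congr 1
  · simpa using val_sub_one_add_one hv
  · exact Finset.sum_congr rfl fun l hl => by simp [Pi.single_eq_of_ne (Finset.ne_of_mem_erase hl)]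

variable {k : ℕ}

def torusGraph (k : ℕ) : SimpleGraph (ZMod k → ZMod 4) where
  Adj x y := ∃ d, y = x + Pi.single d 1 ∨ x = y + Pi.single d 1
  symm := ⟨fun _ _ ⟨d, h⟩ => ⟨d, h.symm⟩⟩
  loopless := ⟨fun x ⟨d, h⟩ => by
    have h : x = x + Pi.single d 1 := h.elim id id
    rw [left_eq_add, Pi.single_eq_zero_iff] at h
    exact absurd h (by decide)⟩

lemma eq_add_single_iff {x y : ZMod k → ZMod 4} {d : ZMod k} :
    y = x + Pi.single d 1 ↔ y d = x d + 1 ∧ ∀ l ≠ d, x l = y l := by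
  constructor
  · rintro rfl
    exact ⟨by simp, fun l hl => (add_single_apply_of_ne x 1 hl).symm⟩
  · rintro ⟨hd, hl⟩
    funext l
    by_cases h : l = d
    · subst h
      simpa using hd
    · rw [add_single_apply_of_ne x 1 h, hl l h]

lemma torusGraph_adj_iff {x y : ZMod k → ZMod 4} :
    (torusGraph k).Adj x y ↔ ∃ d, (y d = x d + 1 ∨ x d = y d + 1) ∧ ∀ l ≠ d, x l = y l := by
  refine exists_congr fun d => ?_
  rw [eq_add_single_iff, eq_add_single_iff, or_and_right]
  exact or_congr Iff.rfl (and_congr Iff.rfl (forall₂_congr fun _ _ => eq_comm))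

lemma torusGraph_adj_add_single (a : ZMod k → ZMod 4) (d : ZMod k) :
    (torusGraph k).Adj a (a + Pi.single d 1) :=
  ⟨d, .inl rfl⟩

def torusEdge (a : ZMod k → ZMod 4) (d : ZMod k) : Sym2 (ZMod k → ZMod 4) :=
  s(a, a + Pi.single d 1)

lemma torusEdge_mem_edgeSet (a : ZMod k → ZMod 4) (d : ZMod k) :
    torusEdge a d ∈ (torusGraph k).edgeSet :=
  torusGraph_adj_add_single a d

lemma torusEdge_injective {a a' : ZMod k → ZMod 4} {d d' : ZMod k}
    (h : torusEdge a d = torusEdge a' d') : a = a' ∧ d = d' := by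
  rcases Sym2.eq_iff.mp h with ⟨rfl, h⟩ | ⟨h₁, h₂⟩
  · exact ⟨rfl, eq_of_single_eq (by decide) (add_left_cancel h)⟩
  · exfalso
    have h : Pi.single d 1 + Pi.single d' 1 = (0 : ZMod k → ZMod 4) := by
      rw [h₁, add_assoc, add_eq_left] at h₂
      rwa [add_comm]
    have hd := congrFun h d
    by_cases hdd : d = d'
    · subst hdd
      simp only [Pi.add_apply, Pi.single_eq_same, Pi.zero_apply] at hd
      exact absurd hd (by decide)
    · simp only [Pi.add_apply, Pi.single_eq_same, Pi.single_eq_of_ne hdd, add_zero,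
        Pi.zero_apply] at hd
      exact absurd hd (by decide)

def matchingEdge (d : ZMod k) : Sym2 (ZMod k → ZMod 4) := torusEdge (Pi.single d 1) d

lemma matchingEdge_injective : Function.Injective (matchingEdge (k := k)) :=
  fun _ _ h => (torusEdge_injective h).2

lemma ncard_range_matchingEdge : (Set.range (matchingEdge (k := k))).ncard = k := by
  rw [← Set.image_univ, Set.ncard_image_of_injective _ matchingEdge_injective, Set.ncard_univ,
    Nat.card_zmod]

lemma exists_single_of_mem_matchingEdge {v : ZMod k → ZMod 4} {d : ZMod k}
    (hv : v ∈ matchingEdge d) : ∃ x ≠ 0, v = Pi.single d x := by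
  rcases Sym2.mem_iff.mp hv with rfl | rfl
  · exact ⟨1, by decide, rfl⟩
  · exact ⟨2, by decide, by rw [← Pi.single_add]; rfl⟩

open Classical in
/-- The `j`-line of `v` is cut at the edge `{s, s + 1}` and rooted at `h`,
where `(s, h) = lineEnds j v`. -/
noncomputable def lineEnds (j : ZMod k) (v : ZMod k → ZMod 4) : ZMod 4 × ZMod 4 :=
  if ∃ l ≠ j, v l ≠ 0 then (v (nextSupport v j) - 1, v (prevSupport v j)) else (1, 0)

open Classical in
noncomputable def treeParent (j : ZMod k) (v : ZMod k → ZMod 4) : ZMod k → ZMod 4 :=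
  if (∃ l ≠ j, v l ≠ 0) ∧ v j = v (prevSupport v j) then v - Pi.single (prevSupport v j) 1
  else v + Pi.single j (lineStep (lineEnds j v).1 (lineEnds j v).2 (v j))

noncomputable def spanningTree (j : ZMod k) : SimpleGraph (ZMod k → ZMod 4) :=
  parentGraph (treeParent j)

open Classical in
/-- The part containing `torusEdge a d`: `some j` is `spanningTree j`, `none` the matching. -/
noncomputable def edgeOwner (a : ZMod k → ZMod 4) (d : ZMod k) : Option (ZMod k) :=
  if a d = (lineEnds d a).1 then (if ∃ l ≠ d, a l ≠ 0 then some (nextSupport a d) else none)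
  else some d

variable {j d : ZMod k} {v a : ZMod k → ZMod 4}

lemma treeParent_eq_sub_single (hoff : ∃ l ≠ j, v l ≠ 0) (hv : v j = v (prevSupport v j)) :
    treeParent j v = v - Pi.single (prevSupport v j) 1 :=
  if_pos ⟨hoff, hv⟩

lemma treeParent_eq_add_lineStep (hv : v j ≠ (lineEnds j v).2) :
    treeParent j v = v + Pi.single j (lineStep (lineEnds j v).1 (lineEnds j v).2 (v j)) := by
  refine if_neg fun ⟨hoff, h⟩ => hv ?_
  rw [lineEnds, if_pos hoff]
  exact h

lemma treeParent_zero : treeParent j (0 : ZMod k → ZMod 4) = 0 := by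
  simp [treeParent, lineEnds, lineStep]

lemma torusGraph_adj_treeParent (h : treeParent j v ≠ v) :
    (torusGraph k).Adj v (treeParent j v) := by
  unfold treeParent at h ⊢
  split_ifs at h ⊢
  · exact ⟨_, .inr (sub_add_cancel v _).symm⟩
  · rcases lineStep_cases (lineEnds j v).1 (lineEnds j v).2 (v j) with hs | ⟨hs, -⟩ | ⟨hs, -⟩
      <;> rw [hs] at h ⊢
    · simp at h
    · exact ⟨j, .inl rfl⟩
    · exact ⟨j, .inr (add_single_neg_add_single v j 1).symm⟩

lemma spanningTree_le_torusGraph (j : ZMod k) : spanningTree j ≤ torusGraph k := by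
  rintro x y ⟨hxy, rfl | rfl⟩
  · exact torusGraph_adj_treeParent (Ne.symm hxy)
  · exact (torusGraph_adj_treeParent hxy).symm

lemma edgeOwner_of_ne (h : v j ≠ (lineEnds j v).1) : edgeOwner v j = some j := if_neg h

lemma edgeOwner_single (d : ZMod k) : edgeOwner (Pi.single d 1) d = none := by
  have hoff : ¬ ∃ l ≠ d, (Pi.single d 1 : ZMod k → ZMod 4) l ≠ 0 := by
    rintro ⟨l, hl, h⟩
    exact h (Pi.single_eq_of_ne hl 1)
  simp [edgeOwner, lineEnds, hoff]

lemma eq_single_of_lineEnds (hoff : ¬ ∃ l ≠ d, a l ≠ 0) (hs : a d = (lineEnds d a).1) :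
    a = Pi.single d 1 := by
  rw [lineEnds, if_neg hoff] at hs
  funext l
  by_cases hl : l = d
  · subst hl
    simpa using hs
  · simpa [Pi.single_eq_of_ne hl] using not_not.mp fun h => hoff ⟨l, hl, h⟩

section Construction

variable [NeZero k]

lemma lineEnds_add_single (x : ZMod 4) : lineEnds j (v + Pi.single j x) = lineEnds j v := by
  have h : ∀ l ≠ j, (v + Pi.single j x : ZMod k → ZMod 4) l = v l :=
    fun l hl => add_single_apply_of_ne v x hl
  have hoff : (∃ l ≠ j, (v + Pi.single j x : ZMod k → ZMod 4) l ≠ 0) ↔ ∃ l ≠ j, v l ≠ 0 :=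
    exists_congr fun l => and_congr_right fun hl => by rw [h l hl]
  simp only [lineEnds, hoff, nextSupport_congr h, prevSupport_congr h]
  split_ifs with hv
  · rw [h _ (nextSupport_spec hv).1.1.symm, h _ (prevSupport_spec hv).1.1]
  · rfl

lemma edgeOwner_sub_single_prevSupport (hoff : ∃ l ≠ j, v l ≠ 0)
    (hv : v j = v (prevSupport v j)) :
    edgeOwner (v - Pi.single (prevSupport v j) 1) (prevSupport v j) = some j := by
  set D := prevSupport v j
  obtain ⟨⟨hDj, hz⟩, hD⟩ := prevSupport_spec hoff
  set a := v - Pi.single D 1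
  have ha : ∀ l ≠ D, a l = v l := fun l hl => by simp [a, Pi.single_eq_of_ne hl]
  have haj : a j ≠ 0 := by rw [ha j hDj.symm, hv]; exact hD
  have hnext : nextSupport a D = j :=
    nextSupport_eq ⟨hDj, fun l hl => (ha l hl.ne_left).trans (hz l hl)⟩ haj
  have hoff' : ∃ l ≠ D, a l ≠ 0 := ⟨j, hDj.symm, haj⟩
  have haD : a D = a j - 1 := by simp [a, ha j hDj.symm, hv]
  rw [edgeOwner, lineEnds, if_pos hoff', if_pos hoff', hnext, if_pos haD]

lemma exists_torusEdge_of_treeParent_ne (h : treeParent j v ≠ v) :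
    ∃ a d, torusEdge a d = s(v, treeParent j v) ∧ edgeOwner a d = some j := by
  by_cases hc : (∃ l ≠ j, v l ≠ 0) ∧ v j = v (prevSupport v j)
  · refine ⟨_, _, ?_, edgeOwner_sub_single_prevSupport hc.1 hc.2⟩
    rw [torusEdge, treeParent_eq_sub_single hc.1 hc.2, sub_add_cancel, Sym2.eq_swap]
  · have hp : treeParent j v =
        v + Pi.single j (lineStep (lineEnds j v).1 (lineEnds j v).2 (v j)) := if_neg hc
    rw [hp] at h ⊢
    rcases lineStep_cases (lineEnds j v).1 (lineEnds j v).2 (v j) with hs | ⟨hs, hvs⟩ | ⟨hs, hvs⟩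
      <;> rw [hs] at h ⊢
    · simp at h
    · exact ⟨v, j, rfl, edgeOwner_of_ne hvs⟩
    · refine ⟨v + Pi.single j (-1), j, ?_, edgeOwner_of_ne ?_⟩
      · rw [torusEdge, add_single_neg_add_single, Sym2.eq_swap]
      · simpa [lineEnds_add_single, sub_eq_add_neg] using hvs

lemma exists_torusEdge_of_mem_edgeSet {e : Sym2 (ZMod k → ZMod 4)}
    (he : e ∈ (spanningTree j).edgeSet) : ∃ a d, torusEdge a d = e ∧ edgeOwner a d = some j := by
  obtain ⟨v, hv, rfl⟩ := mem_edgeSet_parentGraph.mp he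
  exact exists_torusEdge_of_treeParent_ne hv

lemma treeParent_nextSupport_add_single (hoff : ∃ l ≠ d, a l ≠ 0)
    (hs : a d = (lineEnds d a).1) : treeParent (nextSupport a d) (a + Pi.single d 1) = a := by
  obtain ⟨⟨hdJ, hz⟩, hJ⟩ := nextSupport_spec hoff
  set J := nextSupport a d
  set b := a + Pi.single d 1
  have hb : ∀ l ≠ d, b l = a l := fun l hl => add_single_apply_of_ne a 1 hl
  have hbd : b d = a J := by
    rw [lineEnds, if_pos hoff] at hs
    simp [b, hs, J]
  have hprev : prevSupport b J = d :=
    prevSupport_eq ⟨hdJ, fun l hl => (hb l hl.ne_left).trans (hz l hl)⟩ (hbd ▸ hJ)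
  rw [treeParent_eq_sub_single ⟨d, hdJ, hbd ▸ hJ⟩ (by rw [hprev, hb J hdJ.symm, hbd]), hprev,
    add_sub_cancel_right]

lemma treeParent_eq_or_of_ne_lineEnds (hs : a d ≠ (lineEnds d a).1) :
    treeParent d a = a + Pi.single d 1 ∨ treeParent d (a + Pi.single d 1) = a := by
  have hbd : (a + Pi.single d 1 : ZMod k → ZMod 4) d = a d + 1 := by simp
  rcases lineStep_cover _ _ _ hs with ⟨hh, hstep⟩ | ⟨hh, hstep⟩
  · exact .inl (by rw [treeParent_eq_add_lineStep hh, hstep])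
  · refine .inr ?_
    rw [treeParent_eq_add_lineStep (by rwa [lineEnds_add_single, hbd]), lineEnds_add_single, hbd,
      hstep, add_single_add_single_neg]

lemma torusEdge_mem_iUnion_union (a : ZMod k → ZMod 4) (d : ZMod k) :
    torusEdge a d ∈ (⋃ j, (spanningTree j).edgeSet) ∪ Set.range matchingEdge := by
  have hab : a ≠ a + Pi.single d 1 := (torusGraph_adj_add_single a d).ne
  by_cases hs : a d = (lineEnds d a).1
  · by_cases hoff : ∃ l ≠ d, a l ≠ 0
    · exact .inl (Set.mem_iUnion.mpr
        ⟨_, hab, .inr (treeParent_nextSupport_add_single hoff hs)⟩)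
    · exact .inr ⟨d, by rw [matchingEdge, ← eq_single_of_lineEnds hoff hs]⟩
  · exact .inl (Set.mem_iUnion.mpr ⟨d, hab, treeParent_eq_or_of_ne_lineEnds hs⟩)

/-- The step to `v - e_D` lowers the sum by one, which outweighs the distance term
(at most `3`). -/
noncomputable def treeMeasure (j : ZMod k) (v : ZMod k → ZMod 4) : ℕ :=
  4 * ∑ l ∈ Finset.univ.erase j, (v l).val + lineDist (lineEnds j v).1 (lineEnds j v).2 (v j)

lemma treeMeasure_treeParent_lt (hv : v ≠ 0) :
    treeMeasure j (treeParent j v) < treeMeasure j v := by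
  by_cases hc : (∃ l ≠ j, v l ≠ 0) ∧ v j = v (prevSupport v j)
  · obtain ⟨⟨hDj, -⟩, hD⟩ := prevSupport_spec hc.1
    have hsum := sum_val_sub_single_add_one (Finset.mem_erase.mpr ⟨hDj, Finset.mem_univ _⟩) hD
    have := lineDist_le (lineEnds j (treeParent j v)).1 (lineEnds j (treeParent j v)).2
      (treeParent j v j)
    rw [treeParent_eq_sub_single hc.1 hc.2] at this ⊢
    unfold treeMeasure
    omega
  · have hhead : v j ≠ (lineEnds j v).2 := by
      unfold lineEnds
      split_ifs with hoff
      · exact fun h => hc ⟨hoff, h⟩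
      · refine fun h => hv (funext fun l => ?_)
        by_cases hl : l = j
        · exact hl ▸ h
        · exact not_not.mp fun hl' => hoff ⟨l, hl, hl'⟩
    have hsum : ∑ l ∈ Finset.univ.erase j, ((treeParent j v) l).val =
        ∑ l ∈ Finset.univ.erase j, (v l).val := by
      rw [treeParent_eq_add_lineStep hhead]
      exact Finset.sum_congr rfl fun l hl =>
        by rw [add_single_apply_of_ne _ _ (Finset.ne_of_mem_erase hl)]
    have := lineDist_add_lineStep_lt (lineEnds j v).1 (lineEnds j v).2 (v j) hhead
    unfold treeMeasure
    rw [hsum, treeParent_eq_add_lineStep hhead, lineEnds_add_single]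
    simpa using this

lemma isTree_spanningTree (j : ZMod k) : (spanningTree j).IsTree :=
  isTree_parentGraph treeParent_zero fun _ hv => treeMeasure_treeParent_lt hv

theorem isTreeMatchingDecomposition_torusGraph :
    (torusGraph k).IsTreeMatchingDecomposition spanningTree (Set.range matchingEdge) where
  le := spanningTree_le_torusGraph
  isTree := isTree_spanningTree
  pairwise_disjoint i j hij := Set.disjoint_left.mpr fun e hi hj => by
    obtain ⟨a, d, rfl, hai⟩ := exists_torusEdge_of_mem_edgeSet hi
    obtain ⟨a', d', he, haj⟩ := exists_torusEdge_of_mem_edgeSet hj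
    obtain ⟨rfl, rfl⟩ := torusEdge_injective he
    exact hij (Option.some_injective _ (hai.symm.trans haj))
  disjoint_matching j := Set.disjoint_left.mpr fun e hj ⟨d', he⟩ => by
    obtain ⟨a, d, rfl, haj⟩ := exists_torusEdge_of_mem_edgeSet hj
    obtain ⟨rfl, rfl⟩ := torusEdge_injective he
    rw [edgeOwner_single] at haj
    cases haj
  iUnion_union_eq := by
    refine subset_antisymm (Set.union_subset (Set.iUnion_subset fun j =>
      edgeSet_mono (spanningTree_le_torusGraph j)) ?_) fun e he => ?_
    · rintro _ ⟨d, rfl⟩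
      exact torusEdge_mem_edgeSet _ d
    · induction e with
      | _ x y =>
        obtain ⟨d, rfl | rfl⟩ : (torusGraph k).Adj x y := he
        · exact torusEdge_mem_iUnion_union x d
        · rw [Sym2.eq_swap]
          exact torusEdge_mem_iUnion_union y d
  matching := by
    rintro _ ⟨d, rfl⟩ _ ⟨d', rfl⟩ hdd v hv hv'
    obtain ⟨x, hx, rfl⟩ := exists_single_of_mem_matchingEdge hv
    obtain ⟨y, -, hxy⟩ := exists_single_of_mem_matchingEdge hv'
    exact hdd (congrArg matchingEdge (eq_of_single_eq hx hxy))

end Construction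

def grayCode : (Bool → Bool) ≃ ZMod 4 where
  toFun f := if f false then (if f true then 2 else 1) else (if f true then 3 else 0)
  invFun x c := if c then decide (x = 2 ∨ x = 3) else decide (x = 1 ∨ x = 2)
  left_inv := by decide
  right_inv := by decide

lemma existsUnique_ne_iff_grayCode (u w : Bool → Bool) :
    (∃! c, u c ≠ w c) ↔ (grayCode w = grayCode u + 1 ∨ grayCode u = grayCode w + 1) := by
  revert u w; simp only [ExistsUnique]; decide

lemma existsUnique_prod_iff {α β : Type*} {P : α × β → Prop} :
    (∃! p, P p) ↔ ∃ a, (∃! b, P (a, b)) ∧ ∀ a' ≠ a, ∀ b, ¬ P (a', b) := by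
  constructor
  · rintro ⟨⟨a, b⟩, hP, hu⟩
    exact ⟨a, ⟨b, hP, fun b' hb' => congrArg Prod.snd (hu (a, b') hb')⟩,
      fun a' ha' b' hP' => ha' (congrArg Prod.fst (hu (a', b') hP'))⟩
  · rintro ⟨a, ⟨b, hb, hub⟩, hother⟩
    refine ⟨(a, b), hb, fun ⟨a', b'⟩ hP' => ?_⟩
    obtain rfl : a' = a := by_contra fun ha' => hother a' ha' b' hP'
    rw [hub b' hP']

noncomputable def hypercubeIsoTorusGraph (σ : Fin (2 * k) ≃ ZMod k × Bool) :
    hypercube (2 * k) ≃g torusGraph k where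
  toEquiv := (σ.arrowCongr (Equiv.refl Bool)).trans
    ((Equiv.curry _ _ _).trans (Equiv.piCongrRight fun _ => grayCode))
  map_rel_iff' {x y} := by
    rw [torusGraph_adj_iff]
    change _ ↔ ∃! i, x i ≠ y i
    rw [σ.existsUnique_congr_left, existsUnique_prod_iff]
    refine exists_congr fun d => and_congr (existsUnique_ne_iff_grayCode _ _).symm
      (forall₂_congr fun d' _ => ?_)
    simp [grayCode.injective.eq_iff, funext_iff]

end HypercubeDecomposition

open HypercubeDecomposition

/-- The edge set of `Q_{2k}` can be partitioned into `k` pairwise edge-disjoint spanning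
trees together with a matching of size `k` (k pairwise non-adjacent edges). -/
theorem hypercube_decomposition_spanningTrees_matching (k : ℕ) (hk : 1 ≤ k) :
    ∃ (T : Fin k → SimpleGraph (Fin (2 * k) → Bool))
      (R : Set (Sym2 (Fin (2 * k) → Bool))),
      (∀ i, T i ≤ hypercube (2 * k) ∧ (T i).IsTree) ∧
      (Pairwise fun i j => Disjoint (T i).edgeSet (T j).edgeSet) ∧
      (∀ i, Disjoint (T i).edgeSet R) ∧
      ((⋃ i, (T i).edgeSet) ∪ R = (hypercube (2 * k)).edgeSet) ∧
      R.ncard = k ∧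
      (R.Pairwise fun e f => ∀ v, v ∈ e → v ∉ f) := by
  have : NeZero k := ⟨by omega⟩
  let σ : Fin (2 * k) ≃ ZMod k × Bool := Fintype.equivOfCardEq (by simp [mul_comm])
  have h := (isTreeMatchingDecomposition_torusGraph.comap (hypercubeIsoTorusGraph σ)).reindex
    (ZMod.finEquiv k).toEquiv
  exact ⟨_, _, fun i => ⟨h.le i, h.isTree i⟩, h.pairwise_disjoint, h.disjoint_matching,
    h.iUnion_union_eq, (ncard_preimage_sym2Map (hypercubeIsoTorusGraph σ).toEquiv _).trans
    ncard_range_matchingEdge, h.matching⟩
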